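/- arXiv:2207.03275 — 2 statements merged into one kernel-verified Lean document; each statement's English description precedes it below -/
import Mathlib

section
/- Let S be a shape and let σ be any finite sequence of full doubling operations (each an east full doubling D_E or a north full doubling D_N) containing exactly l east operations and exactly k north operations. Then the shape obtained by applying σ (in order) to S equals F_{l,k}(S). -/
/-- Minimum first coordinate of a shape (0 for the empty set). -/
def xmin (S : Finset (ℤ × ℤ)) : ℤ := WithTop.untopD 0 ((S.image Prod.fst).min)

/-- Minimum second coordinate of a shape (0 for the empty set). -/
def ymin (S : Finset (ℤ × ℤ)) : ℤ := WithTop.untopD 0 ((S.image Prod.snd).min)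

/-- East full doubling. -/
def DE (S : Finset (ℤ × ℤ)) : Finset (ℤ × ℤ) :=
  S.image (fun p => (2 * p.1 - xmin S, p.2)) ∪
    S.image (fun p => (2 * p.1 - xmin S + 1, p.2))

/-- North full doubling. -/
def DN (S : Finset (ℤ × ℤ)) : Finset (ℤ × ℤ) :=
  S.image (fun p => (p.1, 2 * p.2 - ymin S)) ∪
    S.image (fun p => (p.1, 2 * p.2 - ymin S + 1))

/-- Apply a sequence of full doubling operations (`true` = east, `false` = north),
in order (head of the list first). -/
def applySeq (σ : List Bool) (S : Finset (ℤ × ℤ)) : Finset (ℤ × ℤ) :=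
  σ.foldl (fun T b => if b then DE T else DN T) S

/-- The (p,q)-rectangle around an integer point. -/
noncomputable def Rec2 (u : ℤ × ℤ) (p q : ℕ) : Finset (ℤ × ℤ) :=
  Finset.Icc u.1 (u.1 + (p : ℤ) - 1) ×ˢ Finset.Icc u.2 (u.2 + (q : ℤ) - 1)

/-- The reconfiguration function `F_{l,k}`. -/
noncomputable def F (l k : ℕ) (S : Finset (ℤ × ℤ)) : Finset (ℤ × ℤ) :=
  S.biUnion fun p =>
    Rec2 (p.1 + ((2 : ℤ) ^ l - 1) * (p.1 - xmin S),
          p.2 + ((2 : ℤ) ^ k - 1) * (p.2 - ymin S)) (2 ^ l) (2 ^ k)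

/-- Two grid points are adjacent if they are at orthogonal distance 1. -/
def Adj (u v : ℤ × ℤ) : Prop := (u.1 - v.1).natAbs + (u.2 - v.2).natAbs = 1

/-- A shape is connected if any two of its points are joined by a path of
adjacent points inside the shape. -/
def ShapeConnected (S : Finset (ℤ × ℤ)) : Prop :=
  ∀ u ∈ S, ∀ v ∈ S,
    Relation.ReflTransGen (fun a b => a ∈ S ∧ b ∈ S ∧ Adj a b) u v

/-- `wD D x` is the number of elements of `D` strictly west of `x`. -/
def wD (D : Finset ℤ) (x : ℤ) : ℕ := (D.filter (· < x)).card

/-- East RC doubling of `S` with doubled column set `D`. -/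
def RCE (S : Finset (ℤ × ℤ)) (D : Finset ℤ) : Finset (ℤ × ℤ) :=
  S.image (fun p => (p.1 + (wD D p.1 : ℤ), p.2)) ∪
    (S.filter fun p => p.1 ∈ D).image fun p => (p.1 + (wD D p.1 : ℤ) + 1, p.2)

/-- North RC doubling of `S` with doubled row set `D`. -/
def RCN (S : Finset (ℤ × ℤ)) (D : Finset ℤ) : Finset (ℤ × ℤ) :=
  S.image (fun p => (p.1, p.2 + (wD D p.2 : ℤ))) ∪
    (S.filter fun p => p.2 ∈ D).image fun p => (p.1, p.2 + (wD D p.2 : ℤ) + 1)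

/-- `D` is an admissible doubled column set for `S`. -/
def eastAdmissible (S : Finset (ℤ × ℤ)) (D : Finset ℤ) : Prop :=
  D.Nonempty ∧ ∀ d ∈ D, ∃ y, (d, y) ∈ S

/-- `D` is an admissible doubled row set for `S`. -/
def northAdmissible (S : Finset (ℤ × ℤ)) (D : Finset ℤ) : Prop :=
  D.Nonempty ∧ ∀ d ∈ D, ∃ x, (x, d) ∈ S

/-- One east or north RC doubling step. -/
def RCStep (S T : Finset (ℤ × ℤ)) : Prop :=
  ∃ D : Finset ℤ,
    (eastAdmissible S D ∧ T = RCE S D) ∨ (northAdmissible S D ∧ T = RCN S D)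

/-- One single column or single row doubling step (an RC step with `|D| = 1`). -/
def SingleStep (S T : Finset (ℤ × ℤ)) : Prop :=
  ∃ D : Finset ℤ, D.card = 1 ∧
    ((eastAdmissible S D ∧ T = RCE S D) ∨ (northAdmissible S D ∧ T = RCN S D))

/-- Translate a shape by a vector. -/
def translateSh (v : ℤ × ℤ) (S : Finset (ℤ × ℤ)) : Finset (ℤ × ℤ) :=
  S.image fun p => (p.1 + v.1, p.2 + v.2)

/-- Single east column doubling at column `d`. -/
def oE (d : ℤ) (T : Finset (ℤ × ℤ)) : Finset (ℤ × ℤ) :=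
  (T.filter fun p => p.1 ≤ d) ∪ (T.filter fun p => d ≤ p.1).image fun p => (p.1 + 1, p.2)

/-- The column of `S` at `x`. -/
def colS (S : Finset (ℤ × ℤ)) (x : ℤ) : Finset ℤ := (S.filter fun p => p.1 = x).image Prod.snd

/-- The row of `S` at `y`. -/
def rowS (S : Finset (ℤ × ℤ)) (y : ℤ) : Finset ℤ := (S.filter fun p => p.2 = y).image Prod.fst

/-- `phiC S x` counts the column changes of `S` in the interval `(xmin S, x]`. -/
noncomputable def phiC (S : Finset (ℤ × ℤ)) (x : ℤ) : ℕ :=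
  ((Finset.Icc (xmin S + 1) x).filter fun x' => colS S x' ≠ colS S (x' - 1)).card

/-- `phiR S y` counts the row changes of `S` in the interval `(ymin S, y]`. -/
noncomputable def phiR (S : Finset (ℤ × ℤ)) (y : ℤ) : ℕ :=
  ((Finset.Icc (ymin S + 1) y).filter fun y' => rowS S y' ≠ rowS S (y' - 1)).card

/-- Column compression of a shape. -/
noncomputable def KC (S : Finset (ℤ × ℤ)) : Finset (ℤ × ℤ) := S.image fun p => ((phiC S p.1 : ℤ), p.2)

/-- Row compression of a shape. -/
noncomputable def KR (S : Finset (ℤ × ℤ)) : Finset (ℤ × ℤ) := S.image fun p => (p.1, (phiR S p.2 : ℤ))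

/-- The baseline shape of `S`. -/
noncomputable def Baseline (S : Finset (ℤ × ℤ)) : Finset (ℤ × ℤ) := KR (KC S)

/-- Number of distinct consecutive columns of `S`. -/
noncomputable def mC (S : Finset (ℤ × ℤ)) : ℕ := (S.image Prod.fst).sup (phiC S) + 1

/-- Number of distinct consecutive rows of `S`. -/
noncomputable def mR (S : Finset (ℤ × ℤ)) : ℕ := (S.image Prod.snd).sup (phiR S) + 1

/-- Consecutive multiplicity of the `i`-th distinct column of `S`. -/
noncomputable def MC (S : Finset (ℤ × ℤ)) (i : ℕ) : ℕ := ((S.image Prod.fst).filter fun x => phiC S x = i).card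

/-- Consecutive multiplicity of the `i`-th distinct row of `S`. -/
noncomputable def MR (S : Finset (ℤ × ℤ)) (i : ℕ) : ℕ := ((S.image Prod.snd).filter fun y => phiR S y = i).card

/-- The four unit directions. -/
def dirs : Finset (ℤ × ℤ) := {(1, 0), (-1, 0), (0, 1), (0, -1)}

/-- One node-addition growth step: a direction `d` is fixed and every new node is
generated at a position `p + d` for an existing node `p`. -/
def AddStep (S T : Finset (ℤ × ℤ)) : Prop :=
  ∃ d ∈ dirs, S ⊆ T ∧ T ⊆ S ∪ S.image (fun p => (p.1 + d.1, p.2 + d.2))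

/-! A full doubling preserves `xmin` and `ymin`, and the two copies of a point `p` under `D_E`
carry `F_{l,k}`-blocks that sit side by side and form the `2^(l+1) × 2^k` block of `p` in
`F_{l+1,k}`. Hence `F_{l,k} ∘ D_E = F_{l+1,k}` and `F_{l,k} ∘ D_N = F_{l,k+1}`, and since
`F_{0,0}` is the identity, induction along `σ` gives the theorem. -/

open Finset

lemma untopD_min_eq_of_isLeast {T : Finset ℤ} {a : ℤ} (h : IsLeast ↑T a) :
    WithTop.untopD 0 T.min = a := by
  have hT : T.Nonempty := ⟨a, h.1⟩
  rw [← coe_min' hT, WithTop.untopD_coe]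
  exact (isLeast_min' T hT).unique h

lemma untopD_min_doubled (T : Finset ℤ) :
    WithTop.untopD 0 (T.image (fun x => 2 * x - WithTop.untopD 0 T.min) ∪
      T.image (fun x => 2 * x - WithTop.untopD 0 T.min + 1)).min = WithTop.untopD 0 T.min := by
  rcases T.eq_empty_or_nonempty with rfl | hT
  · simp
  rw [untopD_min_eq_of_isLeast (isLeast_min' T hT)]
  apply untopD_min_eq_of_isLeast
  refine ⟨mem_union_left _ (mem_image.2 ⟨_, min'_mem T hT, by ring⟩), ?_⟩
  simp only [mem_lowerBounds, coe_union, coe_image, Set.mem_union, Set.mem_image]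
  rintro _ (⟨x, hx, rfl⟩ | ⟨x, hx, rfl⟩) <;> linarith [min'_le T x hx]

lemma xmin_DE (S : Finset (ℤ × ℤ)) : xmin (DE S) = xmin S := by
  simpa [xmin, DE, image_union, image_image, Function.comp_def] using
    untopD_min_doubled (S.image Prod.fst)

lemma ymin_DE (S : Finset (ℤ × ℤ)) : ymin (DE S) = ymin S := by
  simp [ymin, DE, image_union, image_image, Function.comp_def]

lemma xmin_DN (S : Finset (ℤ × ℤ)) : xmin (DN S) = xmin S := by
  simp [xmin, DN, image_union, image_image, Function.comp_def]

lemma ymin_DN (S : Finset (ℤ × ℤ)) : ymin (DN S) = ymin S := by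
  simpa [ymin, DN, image_union, image_image, Function.comp_def] using
    untopD_min_doubled (S.image Prod.snd)

lemma F_zero_zero (S : Finset (ℤ × ℤ)) : F 0 0 S = S := by
  simp [F, Rec2]

lemma Rec2_union_east (a b : ℤ) (p q : ℕ) :
    Rec2 (a, b) p q ∪ Rec2 (a + p, b) p q = Rec2 (a, b) (2 * p) q := by
  rw [Rec2, Rec2, Rec2, ← union_product]
  congr 1
  ext x
  simp only [mem_union, mem_Icc]
  push_cast
  omega

lemma Rec2_union_north (a b : ℤ) (p q : ℕ) :
    Rec2 (a, b) p q ∪ Rec2 (a, b + q) p q = Rec2 (a, b) p (2 * q) := by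
  rw [Rec2, Rec2, Rec2, ← product_union]
  congr 1
  ext y
  simp only [mem_union, mem_Icc]
  push_cast
  omega

lemma F_DE (l k : ℕ) (S : Finset (ℤ × ℤ)) : F l k (DE S) = F (l + 1) k S := by
  rw [F, xmin_DE, ymin_DE, DE, union_biUnion, image_biUnion, image_biUnion, ← biUnion_union, F]
  refine biUnion_congr rfl fun p _ => ?_
  rw [pow_succ' (2 : ℕ) l, ← Rec2_union_east]
  congr 2 <;> ext <;> push_cast [pow_succ] <;> ring

lemma F_DN (l k : ℕ) (S : Finset (ℤ × ℤ)) : F l k (DN S) = F l (k + 1) S := by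
  rw [F, xmin_DN, ymin_DN, DN, union_biUnion, image_biUnion, image_biUnion, ← biUnion_union, F]
  refine biUnion_congr rfl fun p _ => ?_
  rw [pow_succ' (2 : ℕ) k, ← Rec2_union_north]
  congr 2 <;> ext <;> push_cast [pow_succ] <;> ring

lemma applySeq_eq_F (σ : List Bool) (S : Finset (ℤ × ℤ)) :
    applySeq σ S = F (σ.count true) (σ.count false) S := by
  induction σ generalizing S with
  | nil => exact (F_zero_zero S).symm
  | cons b σ ih =>
    cases b
    · rw [show applySeq (false :: σ) S = applySeq σ (DN S) from rfl, ih, F_DN]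
      simp
    · rw [show applySeq (true :: σ) S = applySeq σ (DE S) from rfl, ih, F_DE]
      simp

theorem full_doubling_eq_F_general (S : Finset (ℤ × ℤ))
    (l k : ℕ) (σ : List Bool)
    (hl : σ.count true = l) (hk : σ.count false = k) :
    applySeq σ S = F l k S :=
  hl ▸ hk ▸ applySeq_eq_F σ S

/-- applying any sequence of full doubling operations with exactly `l`
east and `k` north operations to a shape `S` yields `F_{l,k}(S)`. -/
theorem full_doubling_eq_F (S : Finset (ℤ × ℤ)) (hS : S.Nonempty)
    (l k : ℕ) (σ : List Bool)
    (hl : σ.count true = l) (hk : σ.count false = k) :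
    applySeq σ S = F l k S :=
  full_doubling_eq_F_general S l k σ hl hk
end

section
/- The baseline operation is idempotent: for every connected shape S, B(B(S)) = B(S); equivalently, every column and every row of B(S) has consecutive multiplicity 1, i.e., M_C(B(S), i) = 1 for all 0 ≤ i < m_C(B(S)) and M_R(B(S), i) = 1 for all 0 ≤ i < m_R(B(S)). -/
/-!
Column compression sends the `i`-th maximal block of equal consecutive columns to column `i`.
In a connected shape no column between two occupied ones is empty, so after `K_C` the occupied
columns are `0, …, m - 1` and consecutive columns differ. Row compression keeps the occupied
columns and only merges equal rows, hence reflects equality of columns: `B(S)` still has this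
form, and a shape of this form is fixed by `K_C` with all column multiplicities `1`. Transposing
exchanges rows and columns, and the transpose of `B(S)` is `K_C` of a shape without empty rows,
so the same argument shows that `B(S)` is fixed by `K_R`.
-/

open Finset

section Basic

variable {S : Finset (ℤ × ℤ)}

@[simp]
lemma mem_colS {x y : ℤ} : y ∈ colS S x ↔ (x, y) ∈ S := by
  simp [colS]

lemma xmin_eq_min' (hS : (S.image Prod.fst).Nonempty) : xmin S = (S.image Prod.fst).min' hS := by
  rw [xmin, ← coe_min' hS]
  rfl

lemma xmin_le {p : ℤ × ℤ} (hp : p ∈ S) : xmin S ≤ p.1 := by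
  rw [xmin_eq_min' ⟨p.1, mem_image_of_mem _ hp⟩]
  exact min'_le _ _ (mem_image_of_mem _ hp)

lemma exists_xmin_mem (hS : S.Nonempty) : ∃ y, (xmin S, y) ∈ S := by
  have hne : (S.image Prod.fst).Nonempty := hS.image _
  obtain ⟨p, hp, hpx⟩ := mem_image.1 (min'_mem _ hne)
  exact ⟨p.2, by rwa [xmin_eq_min' hne, ← hpx]⟩

end Basic

section ColumnIndex

variable {S : Finset (ℤ × ℤ)}

lemma phiC_mono (S : Finset (ℤ × ℤ)) : Monotone (phiC S) := fun _ _ h =>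
  card_le_card (filter_subset_filter _ (Icc_subset_Icc_right h))

lemma phiC_of_le_xmin {x : ℤ} (h : x ≤ xmin S) : phiC S x = 0 := by
  rw [phiC, Icc_eq_empty (by omega), filter_empty, card_empty]

lemma phiC_add_one {x : ℤ} (h : xmin S ≤ x) :
    phiC S (x + 1) = phiC S x + if colS S (x + 1) = colS S x then 0 else 1 := by
  have hI : Icc (xmin S + 1) (x + 1) = insert (x + 1) (Icc (xmin S + 1) x) := by
    ext z; simp only [mem_Icc, mem_insert]; omega
  rw [phiC, hI, filter_insert, add_sub_cancel_right]
  by_cases hc : colS S (x + 1) = colS S x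
  · simp [hc, phiC]
  · rw [if_pos hc, if_neg hc, card_insert_of_notMem (by simp), phiC]

lemma colS_eq_of_phiC_eq_of_le {x x' : ℤ} (hx : xmin S ≤ x) (h : x ≤ x')
    (hphi : phiC S x = phiC S x') : colS S x = colS S x' := by
  induction x', h using Int.leInduction with
  | base => rfl
  | succ x' hxx' ih =>
    have hs := phiC_add_one (hx.trans hxx')
    have h1 := phiC_mono S hxx'
    split_ifs at hs with hc
    · rw [hc]; exact ih (by omega)
    · omega

lemma colS_eq_of_phiC_eq {x x' : ℤ} (hx : xmin S ≤ x) (hx' : xmin S ≤ x')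
    (hphi : phiC S x = phiC S x') : colS S x = colS S x' := by
  rcases le_total x x' with h | h
  · exact colS_eq_of_phiC_eq_of_le hx h hphi
  · exact (colS_eq_of_phiC_eq_of_le hx' h hphi.symm).symm

lemma exists_phiC_step {x : ℤ} (hx : xmin S ≤ x) {i : ℕ} (hi : i < phiC S x) :
    ∃ z, xmin S < z ∧ z ≤ x ∧ phiC S (z - 1) = i ∧ phiC S z = i + 1 ∧
      colS S z ≠ colS S (z - 1) := by
  induction x, hx using Int.leInduction with
  | base => rw [phiC_of_le_xmin le_rfl] at hi; omega
  | succ x hx ih =>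
    by_cases h : i < phiC S x
    · obtain ⟨z, hz⟩ := ih h
      exact ⟨z, hz.1, by omega, hz.2.2⟩
    · have hs := phiC_add_one hx
      split_ifs at hs with hc
      · omega
      · exact ⟨x + 1, by omega, le_rfl, by simp; omega, by omega, by simpa using hc⟩

lemma exists_phiC_eq {x : ℤ} (hx : xmin S ≤ x) {i : ℕ} (hi : i ≤ phiC S x) :
    ∃ z, xmin S ≤ z ∧ z ≤ x ∧ phiC S z = i := by
  rcases i with _ | i
  · exact ⟨xmin S, le_rfl, hx, phiC_of_le_xmin le_rfl⟩
  · obtain ⟨z, hz, hzx, -, hphi, -⟩ := exists_phiC_step hx hi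
    exact ⟨z, hz.le, hzx, hphi⟩

end ColumnIndex

def NoEmptyColumns (S : Finset (ℤ × ℤ)) : Prop :=
  ∀ p ∈ S, ∀ z : ℤ, xmin S ≤ z → z ≤ p.1 → ∃ y, (z, y) ∈ S

section Connected

variable {S : Finset (ℤ × ℤ)}

lemma ShapeConnected.exists_mem_of_le_of_le (hconn : ShapeConnected S) {u v : ℤ × ℤ}
    (hu : u ∈ S) (hv : v ∈ S) {z : ℤ} (hu_le : u.1 ≤ z) (hle_v : z ≤ v.1) :
    ∃ y, (z, y) ∈ S := by
  induction hconn u hu v hv using Relation.ReflTransGen.head_induction_on with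
  | refl => exact ⟨v.2, by rwa [le_antisymm hle_v hu_le]⟩
  | @head a b hab _ ih =>
    obtain ⟨ha, hb, hadj⟩ := hab
    by_cases hbz : b.1 ≤ z
    · exact ih hb hbz
    · have : z = a.1 := by unfold Adj at hadj; omega
      exact ⟨a.2, by rwa [this]⟩

lemma ShapeConnected.noEmptyColumns (hconn : ShapeConnected S) : NoEmptyColumns S := by
  intro p hp z hz hzp
  obtain ⟨y, hy⟩ := exists_xmin_mem ⟨p, hp⟩
  exact hconn.exists_mem_of_le_of_le hy hp hz hzp

end Connected

section Transpose

def transpose (S : Finset (ℤ × ℤ)) : Finset (ℤ × ℤ) := S.image Prod.swap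

variable {S : Finset (ℤ × ℤ)}

@[simp]
lemma mem_transpose {a b : ℤ} : (a, b) ∈ transpose S ↔ (b, a) ∈ S := by
  simp [transpose]

@[simp]
lemma transpose_transpose (S : Finset (ℤ × ℤ)) : transpose (transpose S) = S := by
  ext ⟨a, b⟩; simp

lemma image_fst_transpose (S : Finset (ℤ × ℤ)) :
    (transpose S).image Prod.fst = S.image Prod.snd := by
  rw [transpose, image_image]; rfl

lemma xmin_transpose (S : Finset (ℤ × ℤ)) : xmin (transpose S) = ymin S := by
  rw [xmin, ymin, image_fst_transpose]

lemma colS_transpose (S : Finset (ℤ × ℤ)) (x : ℤ) : colS (transpose S) x = rowS S x := by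
  ext y; simp [rowS]

lemma phiC_transpose (S : Finset (ℤ × ℤ)) : phiC (transpose S) = phiR S := by
  ext y
  simp only [phiC, phiR, xmin_transpose, colS_transpose]

lemma KR_eq_transpose_KC_transpose (S : Finset (ℤ × ℤ)) :
    KR S = transpose (KC (transpose S)) := by
  rw [KC, phiC_transpose, transpose, transpose, image_image, image_image, KR]
  rfl

lemma mC_transpose (S : Finset (ℤ × ℤ)) : mC (transpose S) = mR S := by
  rw [mC, mR, image_fst_transpose, phiC_transpose]

lemma MC_transpose (S : Finset (ℤ × ℤ)) (i : ℕ) : MC (transpose S) i = MR S i := by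
  rw [MC, MR, image_fst_transpose, phiC_transpose]

lemma shapeConnected_transpose (hconn : ShapeConnected S) : ShapeConnected (transpose S) := by
  rintro ⟨a, b⟩ hu ⟨c, d⟩ hv
  have hswap : ∀ p q : ℤ × ℤ, p ∈ S ∧ q ∈ S ∧ Adj p q →
      p.swap ∈ transpose S ∧ q.swap ∈ transpose S ∧ Adj p.swap q.swap := by
    rintro p q ⟨hp, hq, hpq⟩
    refine ⟨mem_image_of_mem _ hp, mem_image_of_mem _ hq, ?_⟩
    unfold Adj at hpq ⊢
    simp only [Prod.fst_swap, Prod.snd_swap]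
    omega
  exact Relation.ReflTransGen.lift Prod.swap hswap _ _
    (hconn _ (mem_transpose.1 hu) _ (mem_transpose.1 hv))

lemma ymin_le {p : ℤ × ℤ} (hp : p ∈ S) : ymin S ≤ p.2 := by
  obtain ⟨x, y⟩ := p
  simpa [xmin_transpose] using xmin_le (S := transpose S) (p := (y, x)) (by simpa using hp)

end Transpose

section Compression

variable {S : Finset (ℤ × ℤ)}

lemma mem_KC {i y : ℤ} : (i, y) ∈ KC S ↔ ∃ x, (x, y) ∈ S ∧ (phiC S x : ℤ) = i := by
  simp only [KC, mem_image, Prod.mk.injEq, Prod.exists]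
  constructor
  · rintro ⟨x, y, hxy, rfl, rfl⟩; exact ⟨x, hxy, rfl⟩
  · rintro ⟨x, hxy, rfl⟩; exact ⟨x, y, hxy, rfl, rfl⟩

/-- `KC` only merges equal columns, so it loses no point. -/
lemma phiC_mem_KC_iff {x y : ℤ} (hx : xmin S ≤ x) : ((phiC S x : ℤ), y) ∈ KC S ↔ (x, y) ∈ S := by
  refine ⟨fun h => ?_, fun h => mem_KC.2 ⟨x, h, rfl⟩⟩
  obtain ⟨x', hx'y, hphi⟩ := mem_KC.1 h
  have hcol := colS_eq_of_phiC_eq (xmin_le hx'y) hx (by exact_mod_cast hphi)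
  rw [← mem_colS, ← hcol, mem_colS]
  exact hx'y

lemma colS_KC_phiC {x : ℤ} (hx : xmin S ≤ x) : colS (KC S) (phiC S x) = colS S x := by
  ext y; simp only [mem_colS, phiC_mem_KC_iff hx]

lemma xmin_KC (hS : S.Nonempty) : xmin (KC S) = 0 := by
  obtain ⟨y, hy⟩ := exists_xmin_mem hS
  have h0 : xmin (KC S) ≤ 0 := by
    simpa [phiC_of_le_xmin le_rfl] using xmin_le ((phiC_mem_KC_iff le_rfl).2 hy)
  obtain ⟨y', hy'⟩ := exists_xmin_mem (S := KC S) (hS.image _)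
  obtain ⟨x, -, hx⟩ := mem_KC.1 hy'
  omega

lemma noEmptyColumns_KC (hS : NoEmptyColumns S) : NoEmptyColumns (KC S) := by
  rintro ⟨i, y⟩ hp z hz hzi
  dsimp only at hzi
  obtain ⟨x, hxy, rfl⟩ := mem_KC.1 hp
  rw [xmin_KC ⟨_, hxy⟩] at hz
  obtain ⟨w, hw, hwx, hphi⟩ := exists_phiC_eq (x := x) (xmin_le hxy) (i := z.toNat) (by omega)
  obtain ⟨y', hy'⟩ := hS _ hxy w hw hwx
  exact ⟨y', mem_KC.2 ⟨w, hy', by omega⟩⟩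

/-- Consecutive columns of `KC S` sit at a column change of `S`. -/
lemma colS_KC_ne_sub_one {z : ℤ} (hz : 0 < z)
    (hocc : ∃ y, (z, y) ∈ KC S) : colS (KC S) z ≠ colS (KC S) (z - 1) := by
  obtain ⟨y, hy⟩ := hocc
  obtain ⟨x, hxy, hphi⟩ := mem_KC.1 hy
  obtain ⟨w, hw, -, hprev, hcur, hne⟩ :=
    exists_phiC_step (x := x) (xmin_le hxy) (i := (z - 1).toNat) (by omega)
  rwa [show z = phiC S w by omega, show (phiC S w : ℤ) - 1 = phiC S (w - 1) by omega,
    colS_KC_phiC hw.le, colS_KC_phiC (by omega)]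

lemma phiR_mem_KR_iff {x y : ℤ} (hy : ymin S ≤ y) : (x, (phiR S y : ℤ)) ∈ KR S ↔ (x, y) ∈ S := by
  rw [KR_eq_transpose_KC_transpose, mem_transpose, ← phiC_transpose,
    phiC_mem_KC_iff (by rwa [xmin_transpose]), mem_transpose]

lemma colS_eq_of_colS_KR_eq {x x' : ℤ} (h : colS (KR S) x = colS (KR S) x') :
    colS S x = colS S x' := by
  have key : ∀ a b : ℤ, colS (KR S) a = colS (KR S) b → colS S a ⊆ colS S b := by
    intro a b hab y hy
    rw [mem_colS] at hy ⊢
    have hKR : (a, (phiR S y : ℤ)) ∈ KR S := (phiR_mem_KR_iff (ymin_le hy)).2 hy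
    rw [← mem_colS, hab, mem_colS] at hKR
    exact (phiR_mem_KR_iff (ymin_le hy)).1 hKR
  exact Subset.antisymm (key _ _ h) (key _ _ h.symm)

lemma exists_mem_KR_iff {x : ℤ} : (∃ y, (x, y) ∈ KR S) ↔ ∃ y, (x, y) ∈ S := by
  simp [KR]

lemma xmin_KR (S : Finset (ℤ × ℤ)) : xmin (KR S) = xmin S := by
  rw [xmin, xmin, KR, image_image]
  rfl

lemma noEmptyColumns_KR (hS : NoEmptyColumns S) : NoEmptyColumns (KR S) := by
  rintro ⟨x, j⟩ hp z hz hzx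
  rw [xmin_KR] at hz
  obtain ⟨y, hy⟩ := exists_mem_KR_iff.1 ⟨j, hp⟩
  exact exists_mem_KR_iff.2 (hS _ hy z hz hzx)

end Compression

structure ColumnReduced (S : Finset (ℤ × ℤ)) : Prop where
  xmin_eq_zero : xmin S = 0
  noEmptyColumns : NoEmptyColumns S
  colS_ne_sub_one : ∀ z, 0 < z → (∃ y, (z, y) ∈ S) → colS S z ≠ colS S (z - 1)

namespace ColumnReduced

variable {S : Finset (ℤ × ℤ)}

lemma phiC_eq (hS : ColumnReduced S) {p : ℤ × ℤ} (hp : p ∈ S) : (phiC S p.1 : ℤ) = p.1 := by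
  have hp0 : 0 ≤ p.1 := hS.xmin_eq_zero ▸ xmin_le hp
  have hall : (Icc (xmin S + 1) p.1).filter (fun z => colS S z ≠ colS S (z - 1)) =
      Icc (xmin S + 1) p.1 := by
    refine filter_true_of_mem fun z hz => ?_
    rw [mem_Icc, hS.xmin_eq_zero] at hz
    exact hS.colS_ne_sub_one z (by omega)
      (hS.noEmptyColumns p hp z (by rw [hS.xmin_eq_zero]; omega) hz.2)
  rw [phiC, hall, Int.card_Icc, hS.xmin_eq_zero]
  omega

lemma KC_eq (hS : ColumnReduced S) : KC S = S := by
  conv_rhs => rw [← image_id (s := S)]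
  refine image_congr fun p hp => ?_
  simp [hS.phiC_eq hp]

lemma MC_eq_one (hS : ColumnReduced S) (hne : S.Nonempty) {i : ℕ} (hi : i < mC S) :
    MC S i = 1 := by
  obtain ⟨x, hx, hsup⟩ := exists_mem_eq_sup _ (hne.image Prod.fst) (phiC S)
  obtain ⟨p, hp, rfl⟩ := mem_image.1 hx
  have hpx := hS.phiC_eq hp
  rw [mC, hsup] at hi
  obtain ⟨y, hiy⟩ := hS.noEmptyColumns p hp i (by rw [hS.xmin_eq_zero]; omega) (by omega)
  rw [MC, card_eq_one]
  refine ⟨i, ext fun z => ?_⟩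
  simp only [mem_filter, mem_singleton, mem_image]
  constructor
  · rintro ⟨⟨q, hq, rfl⟩, hqi⟩
    have := hS.phiC_eq hq
    omega
  · rintro rfl
    have := hS.phiC_eq hiy
    dsimp only at this
    exact ⟨⟨_, hiy, rfl⟩, by omega⟩

end ColumnReduced

lemma columnReduced_KC {S : Finset (ℤ × ℤ)} (hS : S.Nonempty) (h : NoEmptyColumns S) :
    ColumnReduced (KC S) :=
  ⟨xmin_KC hS, noEmptyColumns_KC h, fun _ hz hocc => colS_KC_ne_sub_one hz hocc⟩

/-- Row compression keeps the occupied columns and reflects equality of columns. -/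
lemma columnReduced_KR {S : Finset (ℤ × ℤ)} (h : ColumnReduced S) : ColumnReduced (KR S) where
  xmin_eq_zero := by rw [xmin_KR, h.xmin_eq_zero]
  noEmptyColumns := noEmptyColumns_KR h.noEmptyColumns
  colS_ne_sub_one z hz hocc hcol :=
    h.colS_ne_sub_one z hz (exists_mem_KR_iff.1 hocc) (colS_eq_of_colS_KR_eq hcol)

/-- the baseline operation is idempotent; equivalently, every column
and row of the baseline has consecutive multiplicity 1. -/
theorem baseline_idempotent (S : Finset (ℤ × ℤ)) (hS : S.Nonempty)
    (hconn : ShapeConnected S) :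
    Baseline (Baseline S) = Baseline S ∧
      (∀ i < mC (Baseline S), MC (Baseline S) i = 1) ∧
      (∀ i < mR (Baseline S), MR (Baseline S) i = 1) := by
  set B := Baseline S
  have hB : ColumnReduced B := columnReduced_KR (columnReduced_KC hS hconn.noEmptyColumns)
  have hBt : ColumnReduced (transpose B) := by
    have htB : transpose B = KC (KR (transpose S)) := by
      simp only [B, Baseline, KR_eq_transpose_KC_transpose, transpose_transpose]
    rw [htB]
    exact columnReduced_KC ((hS.image _).image _)
      (noEmptyColumns_KR (shapeConnected_transpose hconn).noEmptyColumns)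
  have hKR : KR B = B := by
    rw [KR_eq_transpose_KC_transpose, hBt.KC_eq, transpose_transpose]
  have hBne : B.Nonempty := (hS.image _).image _
  refine ⟨by rw [Baseline, hB.KC_eq, hKR], fun i hi => hB.MC_eq_one hBne hi, fun i hi => ?_⟩
  rw [← MC_transpose]
  exact hBt.MC_eq_one (hBne.image _) (by rwa [mC_transpose])
end
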